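/- Let s₀, s₁, s₂ be positive integers, extended to ℤ/12 by s_i = s_{i mod 3}. If there exist nonnegative integers λ₀,...,λ₁₁ such that s_i = λ_{i-3} + λ_{i-2} + λ_{i-1} + λ_i for all i ∈ ℤ/12 (indices mod 12), then s₀ + s₁ + s₂ ≤ 4·min(s₀, s₁, s₂). -/

import Mathlib

/-!
Write `s i = ∑_{k<4} λ (i - k)` as the window sum of `λ` ending at `i`. Every `λ j` lies in exactly
four of the twelve windows, so summing all the equations gives `4 ∑ λ = 4 (s₀ + s₁ + s₂)`. On the
other hand the four windows ending at `i, i + 3, i + 6, i + 9` cover `ℤ/12`, and by periodicity each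
of them sums to `s i`; since `λ ≥ 0` this gives `s₀ + s₁ + s₂ = ∑ λ ≤ 4 s i` for every `i`.
-/

open Finset

def windowSum {M : Type*} [AddCommMonoid M] {n : ℕ} (m : ℕ) (lam : ZMod n → M) (i : ZMod n) : M :=
  ∑ k ∈ range m, lam (i - k)

theorem sum_windowSum {M : Type*} [AddCommMonoid M] {n : ℕ} [NeZero n] (m : ℕ)
    (lam : ZMod n → M) : ∑ i, windowSum m lam i = m • ∑ i, lam i :=
  calc ∑ i, windowSum m lam i = ∑ k ∈ range m, ∑ i, lam (i - k) := sum_comm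
    _ = ∑ _k ∈ range m, ∑ i, lam i :=
      sum_congr rfl fun k _ => Equiv.sum_comp (Equiv.subRight (k : ZMod n)) lam
    _ = m • ∑ i, lam i := by rw [sum_const, card_range]

theorem windowSum_four {M : Type*} [AddCommMonoid M] {n : ℕ} (lam : ZMod n → M) (i : ZMod n) :
    windowSum 4 lam i = lam (i - 3) + lam (i - 2) + lam (i - 1) + lam i := by
  simp [windowSum, sum_range_succ, add_comm, add_assoc]

theorem sum_le_sum_windowSum_four (lam : ZMod 12 → ℕ) (i : ZMod 12) :
    ∑ j, lam j ≤ ∑ j ∈ range 4, windowSum 4 lam (i + j * 3) := by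
  rw [← Equiv.sum_comp (Equiv.addLeft i) lam,
    show ∑ j, lam (Equiv.addLeft i j) = ∑ k ∈ range 12, lam (i + k) from
      Fin.sum_univ_eq_sum_range (fun k => lam (i + k)) 12]
  simp only [windowSum_four, sum_range_succ, sum_range_zero]
  push_cast
  ring_nf
  -- `ring_nf` does not reduce numerals modulo 12
  rw [show (-3 : ZMod 12) = 9 from rfl, show (-2 : ZMod 12) = 10 from rfl,
    show (-1 : ZMod 12) = 11 from rfl]
  omega

theorem stmt_1_general (s0 s1 s2 : ℕ)
    (s : ZMod 12 → ℕ)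
    (hs : ∀ i : ZMod 12,
      s i = if i.val % 3 = 0 then s0 else if i.val % 3 = 1 then s1 else s2)
    (hlam : ∃ lam : ZMod 12 → ℕ,
      ∀ i : ZMod 12, s i = lam (i - 3) + lam (i - 2) + lam (i - 1) + lam i) :
    s0 + s1 + s2 ≤ 4 * min s0 (min s1 s2) := by
  obtain ⟨lam, hl⟩ := hlam
  have hwindow (i : ZMod 12) : windowSum 4 lam i = s i := (windowSum_four lam i).trans (hl i).symm
  have hperiodic : Function.Periodic s 3 := fun i => by
    rw [hs, hs, show (i + 3).val % 3 = i.val % 3 by revert i; decide]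
  have hsum : ∑ i, s i = 4 * (s0 + s1 + s2) := by
    rw [show ∑ i, s i = ∑ k ∈ range 12, s k from Fin.sum_univ_eq_sum_range (fun k => s k) 12]
    simp +decide only [sum_range_succ, sum_range_zero, hs, ↓reduceIte]
    ring
  have htotal : ∑ i, lam i = s0 + s1 + s2 := by
    have := sum_windowSum 4 lam
    rw [Fintype.sum_congr _ _ hwindow, hsum, smul_eq_mul] at this
    omega
  have hbound (i : ZMod 12) : s0 + s1 + s2 ≤ 4 * s i := by
    simpa only [hwindow, fun j : ℕ => hperiodic.nat_mul j i, sum_const, card_range, smul_eq_mul,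
      htotal] using sum_le_sum_windowSum_four lam i
  have h0 := hbound 0
  have h1 := hbound 1
  have h2 := hbound 2
  simp +decide only [hs, ↓reduceIte] at h0 h1 h2
  omega

/-- necessity of `s₀+s₁+s₂ ≤ 4·min` for solvability of the cyclic
12-equation Diophantine system (Theorem 4 of the paper). -/
theorem stmt_1 (s0 s1 s2 : ℕ)
    (h0 : 0 < s0) (h1 : 0 < s1) (h2 : 0 < s2)
    (s : ZMod 12 → ℕ)
    (hs : ∀ i : ZMod 12,
      s i = if i.val % 3 = 0 then s0 else if i.val % 3 = 1 then s1 else s2)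
    (hlam : ∃ lam : ZMod 12 → ℕ,
      ∀ i : ZMod 12, s i = lam (i - 3) + lam (i - 2) + lam (i - 1) + lam i) :
    s0 + s1 + s2 ≤ 4 * min s0 (min s1 s2) :=
  stmt_1_general s0 s1 s2 s hs hlam
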